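/- For a self-adjoint operator A ≥ λ₀E (λ₀ > 0) and |κ| < 2λ₀, the operator ξ⁴·P₀⁻¹(iξ + κ/2; A) has norm at most 1 for every ξ ∈ ℝ, where P₀(μ; A) = (-μE + A)(μE + A)³. -/

import Mathlib

/-! Each of the four factors of `P₀(iξ + κ/2; λ)` has imaginary part `±ξ`, hence modulus at least
`|ξ|`. -/

theorem norm_pow_add_mul_inv_le_one {𝕜 : Type*} [NormedDivisionRing 𝕜] {a z w : 𝕜} {m n : ℕ}
    (hz : ‖a‖ ≤ ‖z‖) (hw : ‖a‖ ≤ ‖w‖) : ‖a ^ (m + n) * (z ^ m * w ^ n)⁻¹‖ ≤ 1 := by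
  rw [norm_mul, norm_inv, norm_mul, norm_pow, norm_pow, norm_pow, pow_add]
  exact mul_inv_le_one_of_le₀
    (mul_le_mul (pow_le_pow_left₀ (norm_nonneg a) hz m) (pow_le_pow_left₀ (norm_nonneg a) hw n)
      (by positivity) (by positivity))
    (by positivity)

theorem stmt_11_general (lam0 : ℝ) (κ : ℝ) :
    ∀ ξ lam : ℝ, lam0 ≤ lam →
      ‖(ξ : ℂ) ^ 4 *
        ((-(Complex.I * ξ + κ / 2) + lam) *
          (Complex.I * ξ + κ / 2 + lam) ^ 3)⁻¹‖ ≤ 1 := by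
  intro ξ lam _
  have hz : ‖(ξ : ℂ)‖ ≤ ‖-(Complex.I * ξ + κ / 2) + lam‖ := by
    simpa using Complex.abs_im_le_norm (-(Complex.I * ξ + κ / 2) + lam)
  have hw : ‖(ξ : ℂ)‖ ≤ ‖Complex.I * ξ + κ / 2 + lam‖ := by
    simpa using Complex.abs_im_le_norm (Complex.I * ξ + κ / 2 + lam)
  simpa using norm_pow_add_mul_inv_le_one (m := 1) (n := 3) hz hw

/-- Scalar (spectral) version: the symbol ξ⁴ · P₀(iξ + κ/2; λ)⁻¹ has modulus at
most 1 for all ξ ∈ ℝ and λ ≥ λ₀, giving ‖ξ⁴ P₀⁻¹(iξ + κ/2; A)‖ ≤ 1. -/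
theorem stmt_11 (lam0 : ℝ) (hlam0 : 0 < lam0) (κ : ℝ) (hκ : |κ| < 2 * lam0) :
    ∀ ξ lam : ℝ, lam0 ≤ lam →
      ‖(ξ : ℂ) ^ 4 *
        ((-(Complex.I * ξ + κ / 2) + lam) *
          (Complex.I * ξ + κ / 2 + lam) ^ 3)⁻¹‖ ≤ 1 :=
  stmt_11_general lam0 κ
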